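/- The full closure operator turns the union of independent theories into a composition: for all propositional Horn theories P and R over A with body(P) ∩ head(R) = ∅, cl_A(P ∪ R) = cl_A(P) ∘ cl_A(R). -/
import Mathlib


/-- A propositional Horn theory over atoms `A`: a finite set of rules `(head, body)`. -/
abbrev Theory (A : Type*) := Finset (A × Finset A)

variable {A : Type*} [Fintype A] [DecidableEq A]

/-- Heads of a (sub)theory. -/
def heads (S : Theory A) : Finset A := S.image Prod.fst

/-- Body atoms of a (sub)theory. -/
def bodies (S : Theory A) : Finset A := S.biUnion Prod.snd

/-- Sequential composition of propositional Horn theories. -/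
def comp (P R : Theory A) : Theory A :=
  P.biUnion fun r =>
    (R.powerset.filter fun S => S.card = r.2.card ∧ heads S = r.2).image
      fun S => (r.1, bodies S)

/-- The unit theory `1_A = {a ← a | a ∈ A}`. -/
def unitTheory (A : Type*) [Fintype A] [DecidableEq A] : Theory A :=
  Finset.univ.image fun a => (a, ({a} : Finset A))

/-- The theory associated with an interpretation `I ⊆ A`. -/
def interp (I : Finset A) : Theory A := I.image fun a => (a, (∅ : Finset A))

/-- The van Emden–Kowalski operator. -/
def vek (P : Theory A) (I : Finset A) : Finset A :=
  (P.filter fun r => r.2 ⊆ I).image Prod.fst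

/-- The facts (rules with empty body) of a theory. -/
def facts (P : Theory A) : Theory A := P.filter fun r => r.2 = ∅

/-- The proper rules (rules with nonempty body) of a theory. -/
def proper (P : Theory A) : Theory A := P.filter fun r => r.2 ≠ ∅

/-- The left reduct `^I P`. -/
def leftReduct (I : Finset A) (P : Theory A) : Theory A := P.filter fun r => r.1 ∈ I

/-- The right reduct `P^I`. -/
def rightReduct (P : Theory A) (I : Finset A) : Theory A := P.filter fun r => r.2 ⊆ I

/-- The restricted unit theory `1^I = {a ← a | a ∈ I}`. -/
def unitOn (I : Finset A) : Theory A := I.image fun a => (a, ({a} : Finset A))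

/-- The closure `cl_B(P) = {b ← b | b ∈ B} ∪ P`. -/
def cl (B : Finset A) (P : Theory A) : Theory A :=
  (B.image fun b => (b, ({b} : Finset A))) ∪ P

lemma mem_comp {P R : Theory A} {x : A × Finset A} :
    x ∈ comp P R ↔ ∃ r ∈ P, ∃ S, S ⊆ R ∧ S.card = r.2.card ∧ heads S = r.2 ∧ x = (r.1, bodies S) := by
  simp only [comp, Finset.mem_biUnion, Finset.mem_image, Finset.mem_filter, Finset.mem_powerset]
  constructor
  · rintro ⟨r, hr, S, ⟨hS, hc, hh⟩, rfl⟩; exact ⟨r, hr, S, hS, hc, hh, rfl⟩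
  · rintro ⟨r, hr, S, hS, hc, hh, rfl⟩; exact ⟨r, hr, S, ⟨hS, hc, hh⟩, rfl⟩

lemma heads_diag (B : Finset A) : heads (B.image fun b => (b, ({b} : Finset A))) = B := by
  ext a; simp [heads]

lemma bodies_diag (B : Finset A) : bodies (B.image fun b => (b, ({b} : Finset A))) = B := by
  ext a; simp [bodies]

lemma card_diag (B : Finset A) : (B.image fun b => (b, ({b} : Finset A))).card = B.card := by
  apply Finset.card_image_of_injective
  intro a b hab; exact (Prod.mk.injEq ..).mp hab |>.1

/-- The full closure operator turns the union of independent theories into a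
composition: `cl_A(P ∪ R) = cl_A(P) ∘ cl_A(R)`. -/
theorem cl_univ_union (P R : Theory A)
    (h : bodies P ∩ heads R = ∅) :
    cl Finset.univ (P ∪ R) = comp (cl Finset.univ P) (cl Finset.univ R) := by
  ext x
  simp only [cl, mem_comp]
  constructor
  · intro hx
    rw [Finset.mem_union, Finset.mem_union] at hx
    rcases hx with hx | hx | hx
    · -- x is a unit rule (a, {a})
      obtain ⟨a, -, rfl⟩ := Finset.mem_image.mp hx
      refine ⟨(a, {a}), Finset.mem_union_left _ (by simp), {(a, {a})}, ?_, by simp, by simp [heads], by simp [bodies]⟩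
      intro y hy; simp at hy; subst hy
      exact Finset.mem_union_left _ (by simp)
    · -- x ∈ P
      refine ⟨x, Finset.mem_union_right _ hx, x.2.image fun b => (b, ({b} : Finset A)), ?_, card_diag _, heads_diag _, ?_⟩
      · intro y hy; exact Finset.mem_union_left _ (by
          obtain ⟨b, -, rfl⟩ := Finset.mem_image.mp hy; simp)
      · rw [bodies_diag]
    · -- x ∈ R
      refine ⟨(x.1, {x.1}), Finset.mem_union_left _ (by simp), {x}, ?_, by simp, by simp [heads], by simp [bodies]⟩
      intro y hy; simp at hy; subst hy
      exact Finset.mem_union_right _ hx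
  · rintro ⟨r, hr, S, hS, hc, hh, rfl⟩
    rw [Finset.mem_union]
    rcases Finset.mem_union.mp hr with hr | hr
    · -- r unit, so S = {s}, result = s ∈ cl R
      obtain ⟨a, -, rfl⟩ := Finset.mem_image.mp hr
      simp only at hc hh
      rw [Finset.card_singleton] at hc
      obtain ⟨s, rfl⟩ := Finset.card_eq_one.mp hc
      have hs1 : s.1 = a := by
        have := hh; simp [heads] at this; exact this
      have : (a, bodies {s}) = s := by
        simp [bodies]; rw [← hs1]
      rw [this]
      rcases Finset.mem_union.mp (hS (Finset.mem_singleton_self s)) with h' | h'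
      · exact Or.inl h'
      · exact Or.inr (Finset.mem_union_right _ h')
    · -- r ∈ P: every s ∈ S is a unit rule
      have hSunit : ∀ s ∈ S, s.2 = {s.1} := by
        intro s hs
        rcases Finset.mem_union.mp (hS hs) with h' | h'
        · obtain ⟨b, -, hb⟩ := Finset.mem_image.mp h'
          rw [← hb]
        · exfalso
          have hs1 : s.1 ∈ heads R := Finset.mem_image_of_mem Prod.fst h'
          have hs2 : s.1 ∈ bodies P := by
            have : s.1 ∈ heads S := Finset.mem_image_of_mem Prod.fst hs
            rw [hh] at this
            exact Finset.mem_biUnion.mpr ⟨r, hr, this⟩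
          have := Finset.eq_empty_iff_forall_notMem.mp h s.1
          exact this (Finset.mem_inter.mpr ⟨hs2, hs1⟩)
      have hb : bodies S = heads S := by
        ext a
        simp only [bodies, heads, Finset.mem_biUnion, Finset.mem_image]
        constructor
        · rintro ⟨s, hs, ha⟩; rw [hSunit s hs] at ha; simp at ha; exact ⟨s, hs, ha.symm⟩
        · rintro ⟨s, hs, ha⟩; exact ⟨s, hs, by rw [hSunit s hs]; simp [ha]⟩
      rw [hb, hh]
      exact Or.inr (Finset.mem_union_left _ hr)
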